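/- The co-Russell paradox: the theory T_H is unsatisfiable (it has no model; equivalently it proves a contradiction). -/

import Mathlib

/-!
Both `H⁺` and `H⁻` are extracts of sets of Kuratowski pairs, so by injectivity of pairs
`x ∈ H⁺ ↔ x ∈ x ∨ x = A[A]` and `x ∈ H⁻ ↔ x ∈ x ∧ x ≠ B[B]`; extensionality identifies
`A[A]` with `H⁺` and `B[B]` with `H⁻`. Hence `H⁺ ∈ H⁺` and `H⁻ ∉ H⁻`, so `H⁺ ≠ H⁻`; yet
every `x ∈ x` lies in both, and `H⁺ ∈ H⁻`, so `H⁺` and `H⁻` have the same elements,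
contradicting extensionality.
-/

open FirstOrder FirstOrder.Language

namespace CoRussellParadox

/-- The language `L'` with a single binary relation symbol `∈` and four constant
symbols `A`, `B`, `H⁺`, `H⁻` (coded as `Fin 4`). -/
def L : Language :=
  ⟨fun n => match n with | 0 => Fin 4 | _ => Empty,
   fun n => match n with | 2 => Unit | _ => Empty⟩

/-- The membership relation symbol. -/
def memRel : L.Relations 2 := Unit.unit

/-- The constant symbol `A`. -/
def cA : L.Constants := (0 : Fin 4)
/-- The constant symbol `B`. -/
def cB : L.Constants := (1 : Fin 4)
/-- The constant symbol `H⁺`. -/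
def cHp : L.Constants := (2 : Fin 4)
/-- The constant symbol `H⁻`. -/
def cHm : L.Constants := (3 : Fin 4)

/-- `memF t₁ t₂` is the atomic formula `t₁ ∈ t₂`. -/
def memF {n : ℕ} (t₁ t₂ : L.Term (Empty ⊕ Fin n)) : L.BoundedFormula Empty n :=
  memRel.boundedFormula₂ t₁ t₂

/-- Inclusion of a term in context `n` into the larger context `n + k`. -/
def tl {n : ℕ} (k : ℕ) (t : L.Term (Empty ⊕ Fin n)) : L.Term (Empty ⊕ Fin (n + k)) :=
  t.relabel (Sum.map id (Fin.castAdd k))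

/-- `z = ⟨a,b⟩` (Kuratowski pair), as the formula
`∃p∃q(∀x(x∈p ↔ x=a) ∧ ∀x(x∈q ↔ (x=a ∨ x=b)) ∧ ∀x(x∈z ↔ (x=p ∨ x=q)))`. -/
def isPairF {n : ℕ} (z a b : L.Term (Empty ⊕ Fin n)) : L.BoundedFormula Empty n :=
  ∃' ∃' (
    (∀' (memF (&⟨n + 2, by omega⟩) (&⟨n, by omega⟩) ⇔
        ((&(⟨n + 2, by omega⟩ : Fin (n + 3))) =' tl 3 a))) ⊓
    (∀' (memF (&⟨n + 2, by omega⟩) (&⟨n + 1, by omega⟩) ⇔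
        (((&(⟨n + 2, by omega⟩ : Fin (n + 3))) =' tl 3 a) ⊔
         ((&(⟨n + 2, by omega⟩ : Fin (n + 3))) =' tl 3 b)))) ⊓
    (∀' (memF (&⟨n + 2, by omega⟩) (tl 3 z) ⇔
        (((&(⟨n + 2, by omega⟩ : Fin (n + 3))) =' (&⟨n, by omega⟩)) ⊔
         ((&(⟨n + 2, by omega⟩ : Fin (n + 3))) =' (&⟨n + 1, by omega⟩))))))

/-- Extensionality: `∀y∀z(∀x(x∈y ↔ x∈z) → y=z)`. -/
def extAx : L.Sentence :=
  ∀' ∀' ((∀' (memF (&2) (&0) ⇔ memF (&2) (&1))) ⟹ ((&0) =' (&1)))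

/-- Pairing: `∀a∀b∃y∀x(x∈y ↔ (x=a ∨ x=b))`. -/
def pairAx : L.Sentence :=
  ∀' ∀' ∃' ∀' (memF (&3) (&2) ⇔ (((&3) =' (&0)) ⊔ ((&3) =' (&1))))

/-- Extracting: `∀a∃y∀x(x∈y ↔ ∃z(z=⟨a,x⟩ ∧ z∈a))`. -/
def extractAx : L.Sentence :=
  ∀' ∃' ∀' (memF (&2) (&1) ⇔ ∃' (isPairF (&3) (&0) (&2) ⊓ memF (&3) (&0)))

/-- `w = v[v]`, i.e. `∀u(u∈w ↔ ∃z(z=⟨v,u⟩ ∧ z∈v))`, here with `v = &1`, `w = &2`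
in context `3` (as used in the axioms for `A` and `B`). -/
def wEqExtractF : L.BoundedFormula Empty 3 :=
  ∀' (memF (&3) (&2) ⇔ ∃' (isPairF (&4) (&1) (&3) ⊓ memF (&4) (&1)))

/-- The axiom `∀x(x∈A ↔ ∃v∃w(x=⟨v,w⟩ ∧ (w∈w ∨ w=v[v])))`. -/
def axA : L.Sentence :=
  ∀' (memF (&0) (Constants.term cA) ⇔
    ∃' ∃' (isPairF (&0) (&1) (&2) ⊓ (memF (&2) (&2) ⊔ wEqExtractF)))

/-- The axiom `∀x(x∈B ↔ ∃v∃w(x=⟨v,w⟩ ∧ (w∈w ∧ ¬w=v[v])))`. -/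
def axB : L.Sentence :=
  ∀' (memF (&0) (Constants.term cB) ⇔
    ∃' ∃' (isPairF (&0) (&1) (&2) ⊓ (memF (&2) (&2) ⊓ ∼wEqExtractF)))

/-- The axiom `∀x(x∈H⁺ ↔ ∃z(z=⟨A,x⟩ ∧ z∈A))`. -/
def axHp : L.Sentence :=
  ∀' (memF (&0) (Constants.term cHp) ⇔
    ∃' (isPairF (&1) (Constants.term cA) (&0) ⊓ memF (&1) (Constants.term cA)))

/-- The axiom `∀x(x∈H⁻ ↔ ∃z(z=⟨B,x⟩ ∧ z∈B))`. -/
def axHm : L.Sentence :=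
  ∀' (memF (&0) (Constants.term cHm) ⇔
    ∃' (isPairF (&1) (Constants.term cB) (&0) ⊓ memF (&1) (Constants.term cB)))

/-- The theory `T_H`: extensionality, pairing, extracting, and the defining axioms
of `A`, `B`, `H⁺` and `H⁻`. -/
def TH : L.Theory := {extAx, pairAx, extractAx, axA, axB, axHp, axHm}

variable {M : Type*} [L.Structure M]

def Mem (x y : M) : Prop := Structure.RelMap memRel ![x, y]

local infix:50 " ∈ᴹ " => Mem

variable (M) in
def Extensional : Prop := ∀ y z : M, (∀ x, x ∈ᴹ y ↔ x ∈ᴹ z) → y = z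

variable (M) in
def HasPairs : Prop := ∀ a b : M, ∃ y, ∀ x, x ∈ᴹ y ↔ x = a ∨ x = b

def IsPair (z a b : M) : Prop :=
  ∃ p q : M, (∀ x, x ∈ᴹ p ↔ x = a) ∧ (∀ x, x ∈ᴹ q ↔ x = a ∨ x = b) ∧
    ∀ x, x ∈ᴹ z ↔ x = p ∨ x = q

/-- `w = v[v]`. -/
def IsExtract (v w : M) : Prop := ∀ u, u ∈ᴹ w ↔ ∃ z, IsPair z v u ∧ z ∈ᴹ v

theorem HasPairs.exists_isPair (h : HasPairs M) (a b : M) : ∃ z, IsPair z a b := by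
  obtain ⟨p, hp⟩ := h a a
  obtain ⟨q, hq⟩ := h a b
  obtain ⟨z, hz⟩ := h p q
  exact ⟨z, p, q, fun x => by rw [hp x, or_self], hq, hz⟩

theorem IsPair.mem_of_mem {z a b y : M} (h : IsPair z a b) (hy : y ∈ᴹ z) : a ∈ᴹ y := by
  obtain ⟨p, q, hp, hq, hz⟩ := h
  rcases (hz y).mp hy with rfl | rfl
  exacts [(hp a).mpr rfl, (hq a).mpr (Or.inl rfl)]

theorem IsPair.eq_or_eq_of_mem {z a b y x : M} (h : IsPair z a b) (hy : y ∈ᴹ z)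
    (hx : x ∈ᴹ y) : x = a ∨ x = b := by
  obtain ⟨p, q, hp, hq, hz⟩ := h
  rcases (hz y).mp hy with rfl | rfl
  exacts [Or.inl ((hp x).mp hx), (hq x).mp hx]

theorem IsPair.exists_mem_right_mem {z a b : M} (h : IsPair z a b) :
    ∃ y, y ∈ᴹ z ∧ b ∈ᴹ y := by
  obtain ⟨p, q, -, hq, hz⟩ := h
  exact ⟨q, (hz q).mpr (Or.inr rfl), (hq b).mpr (Or.inr rfl)⟩

theorem IsPair.inj {z a b a' b' : M} (h : IsPair z a b) (h' : IsPair z a' b') :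
    a = a' ∧ b = b' := by
  have left_eq : a' = a := by
    obtain ⟨p, q, hp, -, hz⟩ := h
    exact (hp a').mp (h'.mem_of_mem ((hz p).mpr (Or.inl rfl)))
  have right_eq_or {a b a' b' : M} (h : IsPair z a b) (h' : IsPair z a' b') :
      b = a' ∨ b = b' := by
    obtain ⟨y, hy, hb⟩ := h.exists_mem_right_mem
    exact h'.eq_or_eq_of_mem hy hb
  subst left_eq
  exact ⟨rfl, by grind [right_eq_or h h', right_eq_or h' h]⟩

theorem IsExtract.unique (hext : Extensional M) {v w w' : M} (h : IsExtract v w)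
    (h' : IsExtract v w') : w = w' :=
  hext w w' fun u => (h u).trans (h' u).symm

theorem IsExtract.mem_iff (hpairs : HasPairs M) {P : M → M → Prop} {A H : M}
    (hA : ∀ z, z ∈ᴹ A ↔ ∃ v w, IsPair z v w ∧ P v w) (hH : IsExtract A H) (x : M) :
    x ∈ᴹ H ↔ P A x := by
  refine (hH x).trans ⟨?_, fun hx => ?_⟩
  · rintro ⟨z, hz, hzA⟩
    obtain ⟨v, w, hz', hvw⟩ := (hA z).mp hzA
    obtain ⟨rfl, rfl⟩ := hz.inj hz'
    exact hvw
  · obtain ⟨z, hz⟩ := hpairs.exists_isPair A x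
    exact ⟨z, hz, (hA z).mpr ⟨A, x, hz, hx⟩⟩

theorem mem_iff_mem_self_or_eq (hext : Extensional M) (hpairs : HasPairs M) {A H : M}
    (hA : ∀ z, z ∈ᴹ A ↔ ∃ v w, IsPair z v w ∧ (w ∈ᴹ w ∨ IsExtract v w))
    (hH : IsExtract A H) (x : M) : x ∈ᴹ H ↔ x ∈ᴹ x ∨ x = H := by
  rw [hH.mem_iff hpairs hA]
  exact or_congr_right ⟨fun hx => hx.unique hext hH, fun hx => hx ▸ hH⟩

theorem mem_iff_mem_self_and_ne (hext : Extensional M) (hpairs : HasPairs M) {B H : M}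
    (hB : ∀ z, z ∈ᴹ B ↔ ∃ v w, IsPair z v w ∧ (w ∈ᴹ w ∧ ¬ IsExtract v w))
    (hH : IsExtract B H) (x : M) : x ∈ᴹ H ↔ x ∈ᴹ x ∧ x ≠ H := by
  rw [hH.mem_iff hpairs hB]
  exact and_congr_right fun _ => not_congr ⟨fun hx => hx.unique hext hH, fun hx => hx ▸ hH⟩

theorem false_of_coRussell_sets (hext : Extensional M) {Hp Hm : M}
    (hHp : ∀ x, x ∈ᴹ Hp ↔ x ∈ᴹ x ∨ x = Hp) (hHm : ∀ x, x ∈ᴹ Hm ↔ x ∈ᴹ x ∧ x ≠ Hm) :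
    False := by
  have hHpHp : Hp ∈ᴹ Hp := (hHp Hp).mpr (Or.inr rfl)
  have hHmHm : ¬ Hm ∈ᴹ Hm := fun h => ((hHm Hm).mp h).2 rfl
  have hne : Hp ≠ Hm := fun h => hHmHm (h ▸ hHpHp)
  refine hne (hext Hp Hm fun x => ?_)
  rw [hHp x, hHm x]
  constructor
  · rintro (hxx | rfl)
    · exact ⟨hxx, fun h => hHmHm (h ▸ hxx)⟩
    · exact ⟨hHpHp, hne⟩
  · exact fun h => Or.inl h.1

theorem snoc_snoc_snoc_comp_castAdd {α : Type*} {n : ℕ} (xs : Fin n → α) (p q x : α) :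
    Fin.snoc (Fin.snoc (Fin.snoc xs p) q) x ∘ Fin.castAdd 3 = xs := by
  funext i
  exact (Fin.snoc_castSucc ..).trans <| (Fin.snoc_castSucc ..).trans (Fin.snoc_castSucc ..)

theorem realize_isPairF {n : ℕ} (z a b : L.Term (Empty ⊕ Fin n)) (v : Empty → M)
    (xs : Fin n → M) :
    (isPairF z a b).Realize v xs ↔
      IsPair (z.realize (Sum.elim v xs)) (a.realize (Sum.elim v xs))
        (b.realize (Sum.elim v xs)) := by
  simp [isPairF, memF, tl, IsPair, Mem, Fin.snoc, and_assoc,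
    Sum.elim_comp_map, snoc_snoc_snoc_comp_castAdd]

theorem realize_extAx : M ⊨ extAx ↔ Extensional M := by
  simp [extAx, Extensional, memF, Mem, Fin.snoc, Sentence.Realize, Formula.Realize]

theorem realize_pairAx : M ⊨ pairAx ↔ HasPairs M := by
  simp [pairAx, HasPairs, memF, Mem, Fin.snoc, Sentence.Realize, Formula.Realize]

theorem realize_axA : M ⊨ axA ↔ ∀ x : M, x ∈ᴹ (cA : L.Constants) ↔
    ∃ v w, IsPair x v w ∧ (w ∈ᴹ w ∨ IsExtract v w) := by
  simp [axA, wEqExtractF, memF, Mem, IsExtract, realize_isPairF, Fin.snoc,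
    Sentence.Realize, Formula.Realize]

theorem realize_axB : M ⊨ axB ↔ ∀ x : M, x ∈ᴹ (cB : L.Constants) ↔
    ∃ v w, IsPair x v w ∧ (w ∈ᴹ w ∧ ¬ IsExtract v w) := by
  simp [axB, wEqExtractF, memF, Mem, IsExtract, realize_isPairF, Fin.snoc,
    Sentence.Realize, Formula.Realize]

theorem realize_axHp : M ⊨ axHp ↔ IsExtract (cA : M) (cHp : M) := by
  simp [axHp, memF, Mem, IsExtract, realize_isPairF, Fin.snoc,
    Sentence.Realize, Formula.Realize]

theorem realize_axHm : M ⊨ axHm ↔ IsExtract (cB : M) (cHm : M) := by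
  simp [axHm, memF, Mem, IsExtract, realize_isPairF, Fin.snoc,
    Sentence.Realize, Formula.Realize]

/-- The co-Russell paradox: the theory `T_H` is unsatisfiable (it has no model). -/
theorem TH_unsatisfiable : ¬ TH.IsSatisfiable := by
  rintro ⟨M⟩
  have hTH {φ : L.Sentence} (hφ : φ ∈ TH) : M ⊨ φ := Theory.realize_sentence_of_mem TH hφ
  have hext := realize_extAx.mp (hTH (by simp [TH]))
  have hpairs := realize_pairAx.mp (hTH (by simp [TH]))
  have hA := realize_axA.mp (hTH (by simp [TH]))
  have hB := realize_axB.mp (hTH (by simp [TH]))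
  have hHp := realize_axHp.mp (hTH (by simp [TH]))
  have hHm := realize_axHm.mp (hTH (by simp [TH]))
  exact false_of_coRussell_sets hext (mem_iff_mem_self_or_eq hext hpairs hA hHp)
    (mem_iff_mem_self_and_ne hext hpairs hB hHm)

end CoRussellParadox
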